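/- Let A be a hereditary tree (H-tree) on the unit sphere S_X of a Banach space X. For c > 1 and a finite-dimensional subspace F of X, set A_{(F,c)} = {(x_1,...,x_n) ∈ A : ‖a_0 y + Σ_{i=1}^m a_i x_i‖ ≤ c‖a_0 y + Σ_{i=1}^n a_i x_i‖ for all y ∈ F, all scalars a_0,...,a_n ∈ ℝ, and all 0 ≤ m ≤ n}. Then for every countable ordinal α, if A^(α) ≠ ∅, then (A_{(F,c)})^(α) ≠ ∅ for every c > 1 and every finite-dimensional subspace F ⊆ X. -/

import Mathlib

open Metric Set Filter TopologicalSpace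
open scoped ENNReal

noncomputable section

/-- A set `U` in the dual of `X` is weak\*-open if every point of `U` has a basic weak\*
neighborhood (determined by finitely many points of `X`) contained in `U`. -/
def IsWeakStarOpen {X : Type*} [NormedAddCommGroup X] [NormedSpace ℝ X]
    (U : Set (X →L[ℝ] ℝ)) : Prop :=
  ∀ f ∈ U, ∃ (n : ℕ) (x : Fin n → X) (δ : ℝ), 0 < δ ∧
    ∀ g : X →L[ℝ] ℝ, (∀ i, |g (x i) - f (x i)| < δ) → g ∈ U

/-- The Szlenk derivation: remove all points of `K` lying in a relatively weak\*-open
subset of `K` of norm diameter less than `ε`. -/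
def szlenkDeriv {X : Type*} [NormedAddCommGroup X] [NormedSpace ℝ X]
    (ε : ℝ) (K : Set (X →L[ℝ] ℝ)) : Set (X →L[ℝ] ℝ) :=
  {f | f ∈ K ∧ ¬ ∃ U : Set (X →L[ℝ] ℝ), IsWeakStarOpen U ∧ f ∈ U ∧
    EMetric.diam (K ∩ U) < ENNReal.ofReal ε}

/-- The dentability derivation: remove all points of `K` lying in a weak\*-slice of `K`
of norm diameter less than `ε`. -/
def dentDeriv {X : Type*} [NormedAddCommGroup X] [NormedSpace ℝ X]
    (ε : ℝ) (K : Set (X →L[ℝ] ℝ)) : Set (X →L[ℝ] ℝ) :=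
  {f | f ∈ K ∧ ¬ ∃ (x : X) (t : ℝ), t < f x ∧
    EMetric.diam {g | g ∈ K ∧ t < g x} < ENNReal.ofReal ε}

/-- Transfinite iteration of a set derivation, with intersections at limit stages. -/
def derivIter {α : Type*} (D : Set α → Set α) (K : Set α) (o : Ordinal.{0}) : Set α :=
  Ordinal.limitRecOn o K (fun _ ih => D ih) (fun o _ ih => ⋂ (β : {β : Ordinal.{0} // β < o}), ih β.1 β.2)

open scoped Classical in
/-- The ordinal index associated with a derivation: the least ordinal at which the iterated
derived set of `K` is empty, or `⊤` (i.e. `∞`) if the derived sets are never empty. -/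
def derivIndex {α : Type*} (D : Set α → Set α) (K : Set α) : WithTop Ordinal.{0} :=
  if ∃ o : Ordinal.{0}, derivIter D K o = ∅
    then ((sInf {o : Ordinal.{0} | derivIter D K o = ∅} : Ordinal.{0}) : WithTop Ordinal.{0})
    else ⊤

/-- The `ε`-Szlenk index `Sz(X,ε)`. -/
def SzEps (X : Type*) [NormedAddCommGroup X] [NormedSpace ℝ X] (ε : ℝ) : WithTop Ordinal.{0} :=
  derivIndex (szlenkDeriv (X := X) ε) (closedBall (0 : X →L[ℝ] ℝ) 1)

/-- The Szlenk index `Sz(X) = sup_{ε > 0} Sz(X,ε)`. -/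
def Sz (X : Type*) [NormedAddCommGroup X] [NormedSpace ℝ X] : WithTop Ordinal.{0} :=
  ⨆ ε : {ε : ℝ // 0 < ε}, SzEps X ε.1

/-- The `ε`-weak\*-dentability index `Dz(X,ε)`. -/
def DzEps (X : Type*) [NormedAddCommGroup X] [NormedSpace ℝ X] (ε : ℝ) : WithTop Ordinal.{0} :=
  derivIndex (dentDeriv (X := X) ε) (closedBall (0 : X →L[ℝ] ℝ) 1)

/-- The weak\*-dentability index `Dz(X) = sup_{ε > 0} Dz(X,ε)`. -/
def Dz (X : Type*) [NormedAddCommGroup X] [NormedSpace ℝ X] : WithTop Ordinal.{0} :=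
  ⨆ ε : {ε : ℝ // 0 < ε}, DzEps X ε.1

/-- `L_p(X)`: the space of `X`-valued Bochner `p`-integrable functions on `[0,1]`. -/
abbrev LpOn (X : Type*) [NormedAddCommGroup X] (p : ℝ≥0∞) :=
  MeasureTheory.Lp (α := ℝ) X p ((MeasureTheory.volume : MeasureTheory.Measure ℝ).restrict (Icc 0 1))

/-- A normalized weakly null sequence. -/
def IsNormalizedWeaklyNull {X : Type*} [NormedAddCommGroup X] [NormedSpace ℝ X] (y : ℕ → X) : Prop :=
  (∀ n, ‖y n‖ = 1) ∧ ∀ f : X →L[ℝ] ℝ, Tendsto (fun n => f (y n)) atTop (nhds 0)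

/-- A tree on the unit sphere of `X`: a nonempty set of finite sequences of norm one vectors,
closed under taking initial segments. -/
def IsTreeOnSphere {X : Type*} [NormedAddCommGroup X] (A : Set (List X)) : Prop :=
  A.Nonempty ∧ (∀ l ∈ A, ∀ x ∈ l, ‖x‖ = 1) ∧ ∀ l ∈ A, ∀ l' : List X, l' <+: l → l' ∈ A

/-- A hereditary tree (H-tree) on the unit sphere of `X`: a tree containing all
subsequences of each of its members. -/
def IsHTree {X : Type*} [NormedAddCommGroup X] (A : Set (List X)) : Prop :=
  IsTreeOnSphere A ∧ ∀ l ∈ A, ∀ l' : List X, List.Sublist l' l → l' ∈ A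

/-- The weak derivative of a tree: all members which admit extensions inside the tree along a
normalized weakly null sequence, together with all initial segments of such members. -/
def weakDeriv {X : Type*} [NormedAddCommGroup X] [NormedSpace ℝ X] (A : Set (List X)) :
    Set (List X) :=
  {l | ∃ m ∈ A, l <+: m ∧ ∃ y : ℕ → X, IsNormalizedWeaklyNull y ∧ ∀ n, m ++ [y n] ∈ A}

/-- The weak index `I_w` of a tree on the unit sphere. -/
def Iw {X : Type*} [NormedAddCommGroup X] [NormedSpace ℝ X] (A : Set (List X)) :
    WithTop Ordinal.{0} :=
  derivIndex weakDeriv A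

/-- The tree `F_ρ^X` of finite normalized sequences which `ρ`-dominate the positive part of
the `ℓ_1` norm. -/
def FTree (X : Type*) [NormedAddCommGroup X] [NormedSpace ℝ X] (ρ : ℝ) : Set (List X) :=
  {l | (∀ x ∈ l, ‖x‖ = 1) ∧ ∀ a : ℕ → ℝ, (∀ i, 0 ≤ a i) →
    ρ * (∑ i ∈ Finset.range l.length, a i) ≤ ‖∑ i ∈ Finset.range l.length, a i • l.getD i 0‖}

/-- A finite sequence is `c`-basic if partial sums of linear combinations are dominated,
with constant `c`, by the full linear combination. -/
def IsCBasicSeq {X : Type*} [NormedAddCommGroup X] [NormedSpace ℝ X] (c : ℝ) (l : List X) : Prop :=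
  ∀ a : ℕ → ℝ, ∀ m ≤ l.length,
    ‖∑ i ∈ Finset.range m, a i • l.getD i 0‖ ≤
      c * ‖∑ i ∈ Finset.range l.length, a i • l.getD i 0‖

/-- An order isomorphism between trees: injective on `A`, mapping `A` into `B`, and preserving
and reflecting the strict initial-segment order. -/
def IsTreeOrderIso {X Y : Type*} (A : Set (List X)) (B : Set (List Y))
    (Ψ : List X → List Y) : Prop :=
  (∀ l ∈ A, Ψ l ∈ B) ∧ Set.InjOn Ψ A ∧
    ∀ l ∈ A, ∀ m ∈ A, ((Ψ l <+: Ψ m ∧ Ψ l ≠ Ψ m) ↔ (l <+: m ∧ l ≠ m))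

/-- Condition (2.1.1): `Ψ` maps weakly null extensions in `A` to weakly null extensions. -/
def MapsWeaklyNullExtensions {X Y : Type*} [NormedAddCommGroup X] [NormedSpace ℝ X]
    [NormedAddCommGroup Y] [NormedSpace ℝ Y] (A : Set (List X)) (Ψ : List X → List Y) : Prop :=
  ∀ l ∈ A, ∀ x : ℕ → X, IsNormalizedWeaklyNull x → (∀ k, l ++ [x k] ∈ A) →
    ∃ y : ℕ → Y, IsNormalizedWeaklyNull y ∧ ∀ k, Ψ (l ++ [x k]) = Ψ l ++ [y k]

/-- `C([0,β])`: the space of continuous functions on the ordinal interval `[0,β]`. -/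
abbrev COrd (β : Ordinal.{0}) := BoundedContinuousFunction (Iic β) ℝ

/-- The tree `A_{(F,c)}` of sequences in `A` which are `c`-dominated even after adding an
arbitrary vector of the finite-dimensional subspace `F`. -/
def treeWithFD {X : Type} [NormedAddCommGroup X] [NormedSpace ℝ X]
    (A : Set (List X)) (F : Submodule ℝ X) (c : ℝ) : Set (List X) :=
  {l | l ∈ A ∧ ∀ y ∈ F, ∀ a₀ : ℝ, ∀ a : ℕ → ℝ, ∀ m ≤ l.length,
    ‖a₀ • y + ∑ i ∈ Finset.range m, a i • l.getD i 0‖ ≤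
      c * ‖a₀ • y + ∑ i ∈ Finset.range l.length, a i • l.getD i 0‖}

/-!
Induction on `α`, strengthened to: every `l ∈ A^(α)` satisfying the defining inequality of
`A_{(F,c')}` for some `1 ≤ c' < c` lies in `(A_{(F,c)})^(α)`. At a successor stage, `l` itself
has weakly null extensions `l ++ [y n]` in `A^(β)`, because all derived trees stay hereditary.
As `G = F + span l` is finite-dimensional, finitely many norm-one functionals norm `G` up to
`ε`, and they tend to zero along `y`; hence eventually `‖v‖ ≤ C ‖v + t • y n‖` on `G`, so
appending `y n` only raises the constant from `c'` to `c' * C < c`.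
-/
section Norming

variable {X : Type} [NormedAddCommGroup X] [NormedSpace ℝ X]

lemma exists_finset_norming (G : Submodule ℝ X) [FiniteDimensional ℝ G] {ε : ℝ}
    (hε : 0 < ε) : ∃ T : Finset (X →L[ℝ] ℝ),
      (∀ g ∈ T, ‖g‖ ≤ 1) ∧ ∀ v ∈ G, ∃ g ∈ T, (1 - ε) * ‖v‖ ≤ g v := by
  classical
  choose g hg_norm hg_apply using fun x : X => exists_dual_vector'' ℝ x
  set K : Set X := (↑) '' sphere (0 : G) 1
  have hK : ∀ w ∈ K, ‖w‖ = 1 ∧ w ∈ G := by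
    rintro _ ⟨u, hu, rfl⟩
    exact ⟨by simpa using hu, u.2⟩
  obtain ⟨t, htK, hcover⟩ :=
    ((isCompact_sphere (0 : G) 1).image continuous_subtype_val).elim_nhds_subcover
      (fun w => ball w ε) fun w _ => ball_mem_nhds w hε
  refine ⟨(insert 0 t).image g, Finset.forall_mem_image.2 fun x _ => hg_norm x,
    fun v hv => ?_⟩
  rcases eq_or_ne v 0 with rfl | hv0
  · exact ⟨g 0, Finset.mem_image_of_mem _ (Finset.mem_insert_self _ _), by simp⟩
  have hvpos : 0 < ‖v‖ := norm_pos_iff.mpr hv0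
  set u := ‖v‖⁻¹ • v
  have huK : u ∈ K := ⟨⟨u, G.smul_mem _ hv⟩, by simp [u, norm_smul, hvpos.ne'], rfl⟩
  obtain ⟨w, hwt, huw⟩ := mem_iUnion₂.mp (hcover huK)
  refine ⟨g w, Finset.mem_image_of_mem _ (Finset.mem_insert_of_mem hwt), ?_⟩
  have hgu : 1 - ε ≤ g w u := by
    have hdiff : |g w (u - w)| ≤ ‖u - w‖ := by
      simpa using (g w).le_of_opNorm_le (hg_norm w) (u - w)
    have hgw : g w w = 1 := by simp [hg_apply, (hK w (htK w hwt)).1]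
    have : g w u = g w w + g w (u - w) := by simp
    rw [mem_ball, dist_eq_norm] at huw
    linarith [neg_abs_le (g w (u - w))]
  calc (1 - ε) * ‖v‖ ≤ g w u * ‖v‖ := by gcongr
    _ = g w v := by simp only [u, map_smul, smul_eq_mul]; field_simp

lemma eventually_norm_le_mul_norm_add_smul (G : Submodule ℝ X) [FiniteDimensional ℝ G]
    {C : ℝ} (hC : 1 < C) {y : ℕ → X} (hy : IsNormalizedWeaklyNull y) :
    ∀ᶠ i in atTop, ∀ v ∈ G, ∀ t : ℝ, ‖v‖ ≤ C * ‖v + t • y i‖ := by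
  set ε := (1 - C⁻¹) / 2
  have hC_inv : C⁻¹ < 1 := inv_lt_one_of_one_lt₀ hC
  have hε : 0 < ε := by simp only [ε]; linarith
  obtain ⟨T, hT_norm, hT⟩ := exists_finset_norming G hε
  have hsmall : ∀ᶠ i in atTop, ∀ g ∈ T, |g (y i)| < ε / 3 :=
    (eventually_all_finset T).2 fun g _ => by
      filter_upwards [(hy.2 g).eventually (ball_mem_nhds 0 (by positivity : 0 < ε / 3))]
        with i hi
      simpa using hi
  filter_upwards [hsmall] with i hi v hv t
  obtain ⟨g, hgT, hgv⟩ := hT v hv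
  have hfunctional : (1 - ε) * ‖v‖ - |t| * (ε / 3) ≤ ‖v + t • y i‖ := by
    have hty : |t * g (y i)| ≤ |t| * (ε / 3) := by
      rw [abs_mul]; exact mul_le_mul_of_nonneg_left (hi g hgT).le (abs_nonneg t)
    calc (1 - ε) * ‖v‖ - |t| * (ε / 3) ≤ g v + t * g (y i) := by
          linarith [neg_abs_le (t * g (y i))]
      _ = g (v + t • y i) := by simp
      _ ≤ ‖v + t • y i‖ := by
          simpa using (le_abs_self _).trans
            (g.le_of_opNorm_le (hT_norm g hgT) (v + t • y i))
  have htriangle : |t| - ‖v‖ ≤ ‖v + t • y i‖ := by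
    have := norm_sub_le (v + t • y i) v
    rw [add_sub_cancel_left, norm_smul, hy.1 i, mul_one, Real.norm_eq_abs] at this
    linarith
  have hlower : C⁻¹ * ‖v‖ ≤ ‖v + t • y i‖ := by
    rcases le_or_gt |t| (3 * ‖v‖) with ht | ht
    · have : |t| * (ε / 3) ≤ ‖v‖ * ε := by nlinarith
      have : C⁻¹ = 1 - 2 * ε := by simp only [ε]; ring
      nlinarith
    · nlinarith [norm_nonneg v]
  calc ‖v‖ = C * (C⁻¹ * ‖v‖) := by field_simp
    _ ≤ C * ‖v + t • y i‖ := by gcongr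

end Norming

section DerivIter

variable {α : Type*} (D : Set α → Set α) (K : Set α)

lemma derivIter_zero : derivIter D K 0 = K :=
  Ordinal.limitRecOn_zero _ _ _

lemma derivIter_add_one (o : Ordinal.{0}) : derivIter D K (o + 1) = D (derivIter D K o) :=
  Ordinal.limitRecOn_add_one _ _ _ _

lemma derivIter_limit {o : Ordinal.{0}} (ho : Order.IsSuccLimit o) :
    derivIter D K o = ⋂ β : {β : Ordinal.{0} // β < o}, derivIter D K β.1 :=
  Ordinal.limitRecOn_limit _ _ _ _ ho

end DerivIter

def SublistClosed {X : Type*} (S : Set (List X)) : Prop :=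
  ∀ l ∈ S, ∀ l' : List X, l'.Sublist l → l' ∈ S

section WeakDeriv

variable {X : Type*} [NormedAddCommGroup X] [NormedSpace ℝ X]

lemma IsNormalizedWeaklyNull.comp_add {y : ℕ → X} (hy : IsNormalizedWeaklyNull y) (k : ℕ) :
    IsNormalizedWeaklyNull fun n => y (n + k) :=
  ⟨fun _ => hy.1 _, fun f => (hy.2 f).comp (tendsto_add_atTop_nat k)⟩

namespace SublistClosed

variable {S : Set (List X)}

lemma weakDeriv (hS : SublistClosed S) : SublistClosed (_root_.weakDeriv S) := by
  rintro _ ⟨m, hm, ⟨s, rfl⟩, y, hy, hext⟩ l' hl'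
  have hl's : (l' ++ s).Sublist _ := hl'.append (List.Sublist.refl s)
  exact ⟨l' ++ s, hS _ hm _ hl's, List.prefix_append _ _, y, hy,
    fun n => hS _ (hext n) _ (hl's.append (List.Sublist.refl [y n]))⟩

lemma derivIter_weakDeriv (hS : SublistClosed S) (o : Ordinal.{0}) :
    SublistClosed (derivIter _root_.weakDeriv S o) := by
  induction o using Ordinal.limitRecOn with
  | zero => rwa [derivIter_zero]
  | add_one o ih => rw [derivIter_add_one]; exact ih.weakDeriv
  | limit o ho ih =>
    rw [derivIter_limit _ _ ho]
    intro l hl l' hl'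
    simp only [mem_iInter] at hl ⊢
    exact fun β => ih β.1 β.2 _ (hl β) _ hl'

lemma exists_extension_of_mem_weakDeriv (hS : SublistClosed S) {l : List X}
    (hl : l ∈ _root_.weakDeriv S) :
    ∃ y : ℕ → X, IsNormalizedWeaklyNull y ∧ ∀ n, l ++ [y n] ∈ S := by
  obtain ⟨m, -, hlm, y, hy, hext⟩ := hl
  exact ⟨y, hy, fun n => hS _ (hext n) _ (hlm.sublist.append (List.Sublist.refl _))⟩

end SublistClosed

end WeakDeriv

section Domination

variable {X : Type} [NormedAddCommGroup X] [NormedSpace ℝ X]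

def IsCBasicSeqOver (F : Submodule ℝ X) (c : ℝ) (l : List X) : Prop :=
  ∀ y ∈ F, ∀ a₀ : ℝ, ∀ a : ℕ → ℝ, ∀ m ≤ l.length,
    ‖a₀ • y + ∑ i ∈ Finset.range m, a i • l.getD i 0‖ ≤
      c * ‖a₀ • y + ∑ i ∈ Finset.range l.length, a i • l.getD i 0‖

lemma mem_treeWithFD {A : Set (List X)} {F : Submodule ℝ X} {c : ℝ} {l : List X} :
    l ∈ treeWithFD A F c ↔ l ∈ A ∧ IsCBasicSeqOver F c l :=
  Iff.rfl

variable {F : Submodule ℝ X} {c c' : ℝ} {l : List X}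

lemma isCBasicSeqOver_nil (hc : 1 ≤ c) : IsCBasicSeqOver F c [] := by
  intro y _ a₀ a m hm
  obtain rfl : m = 0 := Nat.le_zero.mp hm
  simpa using le_mul_of_one_le_left (norm_nonneg _) hc

lemma IsCBasicSeqOver.mono (hl : IsCBasicSeqOver F c l) (hcc' : c ≤ c') :
    IsCBasicSeqOver F c' l := fun y hy a₀ a m hm =>
  (hl y hy a₀ a m hm).trans (mul_le_mul_of_nonneg_right hcc' (norm_nonneg _))

lemma sum_range_smul_getD_append_of_le (a : ℕ → ℝ) (l' : List X) {m : ℕ} (hm : m ≤ l.length) :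
    ∑ i ∈ Finset.range m, a i • (l ++ l').getD i 0 = ∑ i ∈ Finset.range m, a i • l.getD i 0 :=
  Finset.sum_congr rfl fun i hi => by
    rw [List.getD_append _ _ _ _ ((Finset.mem_range.mp hi).trans_le hm)]

lemma sum_range_smul_getD_append_singleton (a : ℕ → ℝ) (z : X) :
    ∑ i ∈ Finset.range (l ++ [z]).length, a i • (l ++ [z]).getD i 0 =
      ∑ i ∈ Finset.range l.length, a i • l.getD i 0 + a l.length • z := by
  rw [List.length_append, List.length_singleton, Finset.sum_range_succ,
    sum_range_smul_getD_append_of_le a [z] le_rfl,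
    List.getD_append_right _ _ _ _ le_rfl, Nat.sub_self]
  rfl

lemma sum_range_smul_getD_mem_span (a : ℕ → ℝ) (l : List X) (m : ℕ) :
    ∑ i ∈ Finset.range m, a i • l.getD i 0 ∈ Submodule.span ℝ {x | x ∈ l} := by
  refine Submodule.sum_mem _ fun i _ => Submodule.smul_mem _ _ ?_
  rcases lt_or_ge i l.length with hi | hi
  · rw [List.getD_eq_getElem _ _ hi]
    exact Submodule.subset_span (List.getElem_mem hi)
  · rw [List.getD_eq_default _ _ hi]
    exact Submodule.zero_mem _

lemma IsCBasicSeqOver.append_singleton {C : ℝ} {z : X} (hl : IsCBasicSeqOver F c l)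
    (hc : 1 ≤ c) (hC : 1 ≤ C)
    (hz : ∀ v ∈ F ⊔ Submodule.span ℝ {x | x ∈ l}, ∀ t : ℝ, ‖v‖ ≤ C * ‖v + t • z‖) :
    IsCBasicSeqOver F (c * C) (l ++ [z]) := by
  intro y hy a₀ a m hm
  rw [sum_range_smul_getD_append_singleton, ← add_assoc]
  set v := a₀ • y + ∑ i ∈ Finset.range l.length, a i • l.getD i 0
  rcases Nat.lt_or_ge m (l ++ [z]).length with hm' | hm'
  · have hml : m ≤ l.length := by
      simp only [List.length_append, List.length_singleton] at hm'; omega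
    have hv : v ∈ F ⊔ Submodule.span ℝ {x | x ∈ l} :=
      Submodule.add_mem_sup (F.smul_mem a₀ hy) (sum_range_smul_getD_mem_span a l _)
    rw [sum_range_smul_getD_append_of_le a [z] hml]
    calc ‖a₀ • y + ∑ i ∈ Finset.range m, a i • l.getD i 0‖ ≤ c * ‖v‖ := hl y hy a₀ a m hml
      _ ≤ c * (C * ‖v + a l.length • z‖) := by gcongr; exact hz v hv _
      _ = c * C * ‖v + a l.length • z‖ := by ring
  · obtain rfl : m = (l ++ [z]).length := le_antisymm hm hm'
    rw [sum_range_smul_getD_append_singleton, ← add_assoc]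
    exact le_mul_of_one_le_left (norm_nonneg _) (one_le_mul_of_one_le_of_one_le hc hC)

lemma IsCBasicSeqOver.eventually_append [FiniteDimensional ℝ F] (hl : IsCBasicSeqOver F c l)
    (hc : 1 ≤ c) (hcc' : c < c') {y : ℕ → X} (hy : IsNormalizedWeaklyNull y) :
    ∀ᶠ n in atTop, IsCBasicSeqOver F c' (l ++ [y n]) := by
  have : FiniteDimensional ℝ (Submodule.span ℝ {x | x ∈ l}) :=
    FiniteDimensional.span_of_finite ℝ l.finite_toSet
  have hC : 1 < c' / c := (one_lt_div (by linarith)).mpr hcc'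
  filter_upwards [eventually_norm_le_mul_norm_add_smul (F ⊔ Submodule.span ℝ {x | x ∈ l}) hC hy]
    with n hn
  simpa only [mul_div_cancel₀ c' (by linarith : c ≠ 0)] using hl.append_singleton hc hC.le hn

lemma mem_derivIter_treeWithFD {A : Set (List X)} (hA : SublistClosed A)
    [FiniteDimensional ℝ F] (o : Ordinal.{0}) (hc' : 1 ≤ c') (hc'c : c' < c)
    (hl : l ∈ derivIter weakDeriv A o) (hlF : IsCBasicSeqOver F c' l) : l ∈ derivIter weakDeriv (treeWithFD A F c) o := by
  induction o using Ordinal.limitRecOn generalizing c' l with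
  | zero =>
    rw [derivIter_zero] at hl ⊢
    exact mem_treeWithFD.2 ⟨hl, hlF.mono hc'c.le⟩
  | add_one o ih =>
    rw [derivIter_add_one] at hl ⊢
    have hAo := hA.derivIter_weakDeriv o
    obtain ⟨y, hy, hext⟩ := hAo.exists_extension_of_mem_weakDeriv hl
    obtain ⟨k, hk⟩ := eventually_atTop.mp
      (hlF.eventually_append hc' (by linarith : c' < (c' + c) / 2) hy)
    refine ⟨l, ih hc' hc'c (hAo _ (hext 0) l (List.sublist_append_left l _)) hlF,
      List.prefix_refl l, fun n => y (n + k), hy.comp_add k, fun n => ?_⟩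
    exact ih (by linarith) (by linarith) (hext _) (hk _ (Nat.le_add_left k n))
  | limit o ho ih =>
    rw [derivIter_limit _ _ ho, mem_iInter] at hl ⊢
    exact fun β => ih β.1 β.2 hc' hc'c (hl β) hlF

end Domination

theorem derivIter_treeWithFD_nonempty_general
    (X : Type) [NormedAddCommGroup X] [NormedSpace ℝ X]
    (A : Set (List X)) (hA : IsHTree A)
    (α : Ordinal.{0})
    (h : derivIter weakDeriv A α ≠ ∅) :
    ∀ c : ℝ, 1 < c → ∀ F : Submodule ℝ X, FiniteDimensional ℝ F →
      derivIter weakDeriv (treeWithFD A F c) α ≠ ∅ := by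
  intro c hc F hF
  have hA_sublist : SublistClosed A := hA.2
  obtain ⟨l, hl⟩ := nonempty_iff_ne_empty.mpr h
  have hnil : [] ∈ derivIter weakDeriv A α :=
    hA_sublist.derivIter_weakDeriv α l hl [] l.nil_sublist
  exact nonempty_iff_ne_empty.mp ⟨[], mem_derivIter_treeWithFD (F := F) hA_sublist α le_rfl hc
    hnil (isCBasicSeqOver_nil le_rfl)⟩

/-- For an H-tree `A` and a countable ordinal `α`: if `A^(α) ≠ ∅`, then
`(A_{(F,c)})^(α) ≠ ∅` for every `c > 1` and every finite-dimensional subspace `F ⊆ X`. -/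
theorem derivIter_treeWithFD_nonempty
    (X : Type) [NormedAddCommGroup X] [NormedSpace ℝ X] [CompleteSpace X]
    (A : Set (List X)) (hA : IsHTree A)
    (α : Ordinal.{0}) (hα : α < (Cardinal.aleph 1).ord)
    (h : derivIter weakDeriv A α ≠ ∅) :
    ∀ c : ℝ, 1 < c → ∀ F : Submodule ℝ X, FiniteDimensional ℝ F →
      derivIter weakDeriv (treeWithFD A F c) α ≠ ∅ :=
  derivIter_treeWithFD_nonempty_general X A hA α h

end
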